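/- Let φ : (G,g) → T be a hyperelliptic morphism. Then: (i) for every x ∈ X(T), either φ^{-1}(x) consists of exactly two elements, each with d_φ = 1, or φ^{-1}(x) consists of exactly one element with d_φ = 2; (ii) the set C′_φ = { x′ ∈ X(G) : d_φ(x′) = 2 } is a subgraph of G (in particular, if a half-edge of G has degree 2 then so does its root vertex), φ restricts to a bijection C′_φ → C_φ := φ(C′_φ), and C_φ is a subgraph of T. -/

import Mathlib

namespace TropDR

open Finset

/-- `Finset.filter` with classical decidability. -/
noncomputable def cfilter {α : Type*} (p : α → Prop) (s : Finset α) : Finset α :=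
  @Finset.filter α p (Classical.decPred p) s

/-- A graph with legs: a finite set `X` together with an idempotent root map `rt`
and an involution `inv` fixing every root vertex. -/
structure PGraph where
  X : Type
  [fintypeX : Fintype X]
  [decEqX : DecidableEq X]
  rt : X → X
  inv : X → X
  rt_idem : ∀ x, rt (rt x) = rt x
  inv_invol : ∀ x, inv (inv x) = x
  inv_fix_rt : ∀ x, inv (rt x) = rt x

attribute [instance] PGraph.fintypeX PGraph.decEqX

namespace PGraph

variable (G : PGraph)

/-- Vertices are the fixed points (= the image) of the root map. -/
def IsVertex (x : G.X) : Prop := G.rt x = x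

/-- Half-edges are the non-vertices. -/
def IsHalf (x : G.X) : Prop := G.rt x ≠ x

/-- Legs are the `inv`-fixed half-edges. -/
def IsLeg (x : G.X) : Prop := G.IsHalf x ∧ G.inv x = x

/-- Halves of genuine edges: half-edges moved by the involution. -/
def IsEdgeHalf (x : G.X) : Prop := G.IsHalf x ∧ G.inv x ≠ x

noncomputable def vertexSet : Finset G.X := cfilter (fun x => G.IsVertex x) Finset.univ

noncomputable def legSet : Finset G.X := cfilter (fun x => G.IsLeg x) Finset.univ

noncomputable def edgeHalfSet : Finset G.X := cfilter (fun x => G.IsEdgeHalf x) Finset.univ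

/-- Tangent directions at a vertex `v`: half-edges rooted at `v`. -/
noncomputable def tangents (v : G.X) : Finset G.X :=
  cfilter (fun h => G.IsHalf h ∧ G.rt h = v) Finset.univ

noncomputable def valence (v : G.X) : ℕ := (G.tangents v).card

/-- The number of edges: half the number of edge half-edges. -/
noncomputable def numEdges : ℕ := G.edgeHalfSet.card / 2

noncomputable def numLegs : ℕ := G.legSet.card

noncomputable def numVertices : ℕ := G.vertexSet.card

/-- Connectedness: the equivalence relation generated by `x ∼ rt x` and `x ∼ inv x`
has a single class (and `X` is nonempty). -/
def Connected : Prop :=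
  Nonempty G.X ∧ ∀ x y : G.X, Relation.EqvGen (fun a b => G.rt a = b ∨ G.inv a = b) x y

/-- A subgraph: a subset of `X` closed under the root map and the involution. -/
def IsSubgraph (F : Finset G.X) : Prop :=
  (∀ x ∈ F, G.rt x ∈ F) ∧ (∀ x ∈ F, G.inv x ∈ F)

/-- Valency of `v` inside a subgraph `F`. -/
noncomputable def valIn (F : Finset G.X) (v : G.X) : ℕ := (G.tangents v ∩ F).card

end PGraph

/-- A morphism of graphs: commutes with the root maps and involutions,
and maps no edge into a leg. -/
structure GraphHom (G' G : PGraph) where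
  toFun : G'.X → G.X
  map_rt : ∀ x, toFun (G'.rt x) = G.rt (toFun x)
  map_inv : ∀ x, toFun (G'.inv x) = G.inv (toFun x)
  edge_not_leg : ∀ h, G'.IsEdgeHalf h → ¬ G.IsLeg (toFun h)

/-- A harmonic morphism of graphs: a graph morphism together with a degree function. -/
structure HarmonicHom (G' G : PGraph) extends GraphHom G' G where
  deg : G'.X → ℕ
  deg_edge : ∀ h, G'.IsEdgeHalf h → deg (G'.inv h) = deg h
  deg_zero_iff : ∀ h, G'.IsHalf h → (deg h = 0 ↔ G.IsVertex (toFun h))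
  harmonic : ∀ v', G'.IsVertex v' → ∀ h, G.IsHalf h → G.rt h = toFun v' →
    deg v' = ∑ h' ∈ cfilter (fun h' => toFun h' = h) (G'.tangents v'), deg h'

namespace HarmonicHom

variable {G' G : PGraph} (φ : HarmonicHom G' G)

/-- A harmonic morphism is finite if it has positive degree on every half-edge. -/
def Finite : Prop := ∀ h, G'.IsHalf h → 0 < φ.deg h

/-- The sum of the degrees over the vertex fiber of `v`. -/
noncomputable def vertexFiberDeg (v : G.X) : ℕ :=
  ∑ v' ∈ cfilter (fun v' => φ.toFun v' = v) G'.vertexSet, φ.deg v'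

end HarmonicHom

/-- A weighted graph: a graph together with a genus function on (all elements;
only the values at vertices are relevant). -/
structure WGraph extends PGraph where
  gw : X → ℕ

namespace WGraph

variable (G : WGraph)

/-- The genus of a (connected) weighted graph. -/
noncomputable def genus : ℤ :=
  (G.toPGraph.numEdges : ℤ) - (G.toPGraph.numVertices : ℤ) + 1 +
    ∑ v ∈ G.toPGraph.vertexSet, (G.gw v : ℤ)

/-- The Euler characteristic of a vertex. -/
noncomputable def chiV (v : G.X) : ℤ :=
  2 - 2 * (G.gw v : ℤ) - (G.toPGraph.valence v : ℤ)

/-- The Euler characteristic of a (connected) weighted graph. -/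
noncomputable def chi : ℤ := 2 - 2 * G.genus - (G.toPGraph.numLegs : ℤ)

end WGraph

/-- The ramification degree of a (finite) harmonic morphism of weighted graphs at `v'`. -/
noncomputable def ram {G' G : WGraph} (φ : HarmonicHom G'.toPGraph G.toPGraph) (v' : G'.X) : ℤ :=
  (φ.deg v' : ℤ) * G.chiV (φ.toFun v') - G'.chiV v'

def Unramified {G' G : WGraph} (φ : HarmonicHom G'.toPGraph G.toPGraph) : Prop :=
  ∀ v', G'.toPGraph.IsVertex v' → ram φ v' = 0

def Effective {G' G : WGraph} (φ : HarmonicHom G'.toPGraph G.toPGraph) : Prop :=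
  ∀ v', G'.toPGraph.IsVertex v' → 0 ≤ ram φ v'

/-- A tree: a connected weighted graph of genus zero. -/
def IsTree (T : WGraph) : Prop := T.toPGraph.Connected ∧ T.genus = 0

/-- A hyperelliptic morphism: a finite harmonic morphism of degree two onto a tree, such
that `d_φ(v) = 2` at every vertex of positive weight. -/
def IsHyperelliptic {G T : WGraph} (φ : HarmonicHom G.toPGraph T.toPGraph) : Prop :=
  φ.Finite ∧ IsTree T ∧ (∀ v, T.toPGraph.IsVertex v → φ.vertexFiberDeg v = 2) ∧
    (∀ v, G.toPGraph.IsVertex v → 0 < G.gw v → φ.deg v = 2)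

/-!
Harmonicity makes the total degree of every fibre of `φ` equal to the degree of `φ` over the
root of the image point, which is `2`; the degree is positive everywhere (on half-edges by
finiteness, at a vertex by harmonicity along an incident half-edge, or by connectedness if the
vertex is isolated). So each fibre is two points of degree `1` or one point of degree `2`. Degrees
never drop from a half-edge to its root and are preserved by the involution, so the set where the
degree attains its maximum `2` is a subgraph, and graph morphisms map subgraphs to subgraphs.
-/

@[simp]
lemma mem_cfilter {α : Type*} {p : α → Prop} {s : Finset α} {x : α} :
    x ∈ cfilter p s ↔ x ∈ s ∧ p x :=
  @Finset.mem_filter _ _ (Classical.decPred p) _ _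

lemma card_eq_two_or_card_eq_one_of_sum_eq_two {α : Type*} {s : Finset α} {f : α → ℕ}
    (hsum : ∑ y ∈ s, f y = 2) (hpos : ∀ y ∈ s, 0 < f y) :
    (s.card = 2 ∧ ∀ y ∈ s, f y = 1) ∨ (s.card = 1 ∧ ∀ y ∈ s, f y = 2) := by
  have hcard : s.card ≤ 2 :=
    calc s.card = ∑ _y ∈ s, 1 := Finset.card_eq_sum_ones s
      _ ≤ ∑ y ∈ s, f y := Finset.sum_le_sum hpos
      _ = 2 := hsum
  interval_cases hc : s.card
  · simp [Finset.card_eq_zero.mp hc] at hsum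
  · obtain ⟨a, rfl⟩ := Finset.card_eq_one.mp hc
    simpa using hsum
  · classical
    obtain ⟨a, b, hab, rfl⟩ := Finset.card_eq_two.mp hc
    have ha := hpos a (by simp)
    have hb := hpos b (by simp)
    rw [Finset.sum_pair hab] at hsum
    left
    simp only [Finset.mem_insert, Finset.mem_singleton, forall_eq_or_imp, forall_eq, true_and]
    omega

namespace PGraph

variable {P : PGraph}

lemma inv_eq_self_of_isVertex {v : P.X} (hv : P.IsVertex v) : P.inv v = v := by
  have h := P.inv_fix_rt v
  rwa [hv] at h

lemma mem_tangents {v h : P.X} : h ∈ P.tangents v ↔ P.IsHalf h ∧ P.rt h = v := by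
  simp [tangents]

lemma Connected.eq_of_tangents_eq_empty (hP : P.Connected) {v : P.X} (hv : P.IsVertex v)
    (hT : P.tangents v = ∅) (x : P.X) : x = v := by
  have hequiv : Equivalence fun a b : P.X => (a = v ↔ b = v) :=
    ⟨fun _ => Iff.rfl, Iff.symm, Iff.trans⟩
  have hstep : (fun a b => P.rt a = b ∨ P.inv a = b) ≤ fun a b => (a = v ↔ b = v) := by
    rintro a b (rfl | rfl)
    · refine ⟨fun ha => ha ▸ hv, fun hb => ?_⟩
      by_contra ha
      have : a ∈ P.tangents v := mem_tangents.mpr ⟨fun h => ha (h ▸ hb), hb⟩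
      simp [hT] at this
    · refine ⟨fun ha => by rw [ha, inv_eq_self_of_isVertex hv], fun hb => ?_⟩
      rw [← P.inv_invol a, hb, inv_eq_self_of_isVertex hv]
  exact (hequiv.eqvGen_iff.mp (Relation.EqvGen.mono hstep _ _ (hP.2 x v))).mpr rfl

end PGraph

lemma GraphHom.isSubgraph_image {G' G : PGraph} (f : GraphHom G' G) {F : Finset G'.X}
    (hF : G'.IsSubgraph F) : G.IsSubgraph (F.image f.toFun) := by
  constructor
  · intro x hx
    obtain ⟨y, hy, rfl⟩ := Finset.mem_image.mp hx
    exact Finset.mem_image.mpr ⟨G'.rt y, hF.1 y hy, f.map_rt y⟩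
  · intro x hx
    obtain ⟨y, hy, rfl⟩ := Finset.mem_image.mp hx
    exact Finset.mem_image.mpr ⟨G'.inv y, hF.2 y hy, f.map_inv y⟩

namespace HarmonicHom

variable {G' G : PGraph} (φ : HarmonicHom G' G)

lemma isVertex_map {v : G'.X} (hv : G'.IsVertex v) : G.IsVertex (φ.toFun v) := by
  unfold PGraph.IsVertex at *
  rw [← φ.map_rt, hv]

lemma deg_le_deg_rt (h : G'.X) : φ.deg h ≤ φ.deg (G'.rt h) := by
  by_cases hh : G'.IsHalf h
  swap
  · rw [show G'.rt h = h from not_not.mp hh]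
  by_cases h0 : φ.deg h = 0
  · omega
  have hx : G.IsHalf (φ.toFun h) := mt (φ.deg_zero_iff h hh).mpr h0
  rw [φ.harmonic (G'.rt h) (G'.rt_idem h) (φ.toFun h) hx (φ.map_rt h).symm]
  exact Finset.single_le_sum (fun _ _ => Nat.zero_le _)
    (mem_cfilter.mpr ⟨PGraph.mem_tangents.mpr ⟨hh, rfl⟩, rfl⟩)

lemma deg_inv (x : G'.X) : φ.deg (G'.inv x) = φ.deg x := by
  by_cases hx : G'.inv x = x
  · rw [hx]
  exact φ.deg_edge x ⟨fun hv => hx (PGraph.inv_eq_self_of_isVertex hv), hx⟩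

lemma isSubgraph_cfilter_deg_eq {n : ℕ} (hle : ∀ y, φ.deg y ≤ n) :
    G'.IsSubgraph (cfilter (fun y => φ.deg y = n) Finset.univ) := by
  refine ⟨fun y hy => ?_, fun y hy => ?_⟩ <;>
    simp only [mem_cfilter, Finset.mem_univ, true_and] at hy ⊢
  · exact le_antisymm (hle _) (hy ▸ φ.deg_le_deg_rt y)
  · rwa [φ.deg_inv]

/-- Over a vertex the extra fibre elements are contracted half-edges of degree `0`; over a
half-edge the fibre is sorted by roots, and harmonicity at each root gives its degree. -/
lemma sum_deg_fiber (x : G.X) :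
    ∑ y ∈ cfilter (fun y => φ.toFun y = x) Finset.univ, φ.deg y =
      φ.vertexFiberDeg (G.rt x) := by
  unfold vertexFiberDeg
  by_cases hx : G.IsVertex x
  · rw [hx]
    symm
    apply Finset.sum_subset
    · intro y hy
      simp_all
    · intro y hy hyv
      simp only [mem_cfilter, Finset.mem_univ, true_and, PGraph.vertexSet] at hy hyv
      exact (φ.deg_zero_iff y fun hv => hyv ⟨hv, hy⟩).mpr (hy ▸ hx)
  · have hmaps : ∀ y ∈ cfilter (fun y => φ.toFun y = x) Finset.univ,
        G'.rt y ∈ cfilter (fun v => φ.toFun v = G.rt x) G'.vertexSet := by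
      intro y hy
      simp only [mem_cfilter, Finset.mem_univ, true_and, PGraph.vertexSet] at hy ⊢
      exact ⟨G'.rt_idem y, by rw [φ.map_rt, hy]⟩
    rw [← Finset.sum_fiberwise_of_maps_to hmaps]
    refine Finset.sum_congr rfl fun v hv => ?_
    simp only [mem_cfilter, PGraph.vertexSet, Finset.mem_univ, true_and] at hv
    rw [φ.harmonic v hv.1 x hx hv.2.symm]
    congr 1
    ext y
    simp only [Finset.mem_filter, mem_cfilter, Finset.mem_univ, true_and, PGraph.mem_tangents]
    exact ⟨fun ⟨hy, hyv⟩ => ⟨⟨fun hv => hx (hy ▸ φ.isVertex_map hv), hyv⟩, hy⟩,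
      fun ⟨⟨_, hyv⟩, hy⟩ => ⟨hy, hyv⟩⟩

end HarmonicHom

namespace IsHyperelliptic

variable {G T : WGraph} {φ : HarmonicHom G.toPGraph T.toPGraph}

lemma sum_deg_fiber (hφ : IsHyperelliptic φ) (x : T.X) :
    ∑ y ∈ cfilter (fun y => φ.toFun y = x) Finset.univ, φ.deg y = 2 :=
  (φ.sum_deg_fiber x).trans (hφ.2.2.1 _ (T.rt_idem x))

lemma deg_le_two (hφ : IsHyperelliptic φ) (y : G.X) : φ.deg y ≤ 2 :=
  hφ.sum_deg_fiber (φ.toFun y) ▸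
    Finset.single_le_sum (fun _ _ => Nat.zero_le _) (mem_cfilter.mpr ⟨Finset.mem_univ y, rfl⟩)

lemma deg_pos (hφ : IsHyperelliptic φ) (hG : G.toPGraph.Connected) (y : G.X) :
    0 < φ.deg y := by
  by_cases hy : G.toPGraph.IsVertex y
  swap
  · exact hφ.1 y hy
  obtain hT | ⟨h, hh⟩ := (G.tangents y).eq_empty_or_nonempty
  · have hfib : cfilter (fun z => φ.toFun z = φ.toFun y) Finset.univ = {y} := by
      ext z
      simp [hG.eq_of_tangents_eq_empty hy hT z]
    have h2 := hφ.sum_deg_fiber (φ.toFun y)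
    rw [hfib, Finset.sum_singleton] at h2
    omega
  · rw [PGraph.mem_tangents] at hh
    calc 0 < φ.deg h := hφ.1 h hh.1
      _ ≤ φ.deg (G.rt h) := φ.deg_le_deg_rt h
      _ = φ.deg y := by rw [hh.2]

lemma injOn_cfilter_deg_eq_two (hφ : IsHyperelliptic φ) :
    Set.InjOn φ.toFun ↑(cfilter (fun y => φ.deg y = 2) Finset.univ) := by
  intro y hy y' hy' hyy'
  by_contra hne
  simp only [mem_cfilter, Finset.mem_univ, true_and, Finset.mem_coe] at hy hy'
  have hle : ∑ z ∈ {y, y'}, φ.deg z ≤ 2 := by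
    rw [← hφ.sum_deg_fiber (φ.toFun y)]
    refine Finset.sum_le_sum_of_subset fun z hz => ?_
    rcases Finset.mem_insert.mp hz with rfl | hz
    · simp
    · simp [Finset.mem_singleton.mp hz, hyy']
  rw [Finset.sum_pair hne, hy, hy'] at hle
  omega

end IsHyperelliptic

/-- Let `φ : (G,g) → T` be a hyperelliptic morphism (with `G` connected).
Then: (i) for every `x ∈ X(T)`, either `φ⁻¹(x)` has exactly two elements, each with
`d_φ = 1`, or exactly one element with `d_φ = 2`; (ii) the set
`C'_φ = { x' ∈ X(G) : d_φ(x') = 2 }` is a subgraph of `G` (in particular closed under the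
root map), `φ` restricts to a bijection from `C'_φ` onto its image `C_φ = φ(C'_φ)`, and
`C_φ` is a subgraph of `T`. -/
theorem hyperelliptic_dilation_subgraph
    (G T : WGraph) (hG : G.toPGraph.Connected)
    (φ : HarmonicHom G.toPGraph T.toPGraph) (hφ : IsHyperelliptic φ) :
    (∀ x : T.X,
      ((cfilter (fun y => φ.toFun y = x) Finset.univ).card = 2 ∧
        ∀ y ∈ cfilter (fun y => φ.toFun y = x) Finset.univ, φ.deg y = 1) ∨
      ((cfilter (fun y => φ.toFun y = x) Finset.univ).card = 1 ∧
        ∀ y ∈ cfilter (fun y => φ.toFun y = x) Finset.univ, φ.deg y = 2)) ∧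
    G.toPGraph.IsSubgraph (cfilter (fun y => φ.deg y = 2) Finset.univ) ∧
    Set.InjOn φ.toFun ↑(cfilter (fun y => φ.deg y = 2) Finset.univ) ∧
    T.toPGraph.IsSubgraph
      ((cfilter (fun y => φ.deg y = 2) Finset.univ).image φ.toFun) := by
  have hsub := φ.isSubgraph_cfilter_deg_eq hφ.deg_le_two
  refine ⟨fun x => ?_, hsub, hφ.injOn_cfilter_deg_eq_two, φ.isSubgraph_image hsub⟩
  exact card_eq_two_or_card_eq_one_of_sum_eq_two (hφ.sum_deg_fiber x)
    fun y _ => hφ.deg_pos hG y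

end TropDR
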